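/- Let Ω be an n×n real matrix with Ω_{j k} ≥ 0 for all j ≠ k and all column sums zero, with basins N_1, …, N_{n_B} and N_B their union. For each η define κ_η ∈ ℝⁿ by: (κ_η)_j = F for j ∈ N_η, (κ_η)_j = 0 for j ∈ N_B \ N_η, and (κ_η)_l = F_{η,l} for l ∉ N_B, where F is the total weight of all forests of Fin n rooted in N_B and F_{η,l} is the total weight of those forests that attach l to basin N_η. Then Ωᵀ · κ_η = 0 for every η, and the vectors κ_1, …, κ_{n_B} are linearly independent; hence they form a basis of the kernel of Ωᵀ. -/
import Mathlib


open Matrix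
open scoped Classical

/-- Edge of the digraph `G_Ω`: for `k ≠ j`, there is an edge from `k` to `j` iff `Ω j k ≠ 0`. -/
def edgeRel {n : ℕ} (Ω : Matrix (Fin n) (Fin n) ℝ) (k j : Fin n) : Prop :=
  k ≠ j ∧ Ω j k ≠ 0

/-- Reachability in `G_Ω`: the reflexive-transitive closure of the edge relation. -/
def reaches {n : ℕ} (Ω : Matrix (Fin n) (Fin n) ℝ) : Fin n → Fin n → Prop :=
  Relation.ReflTransGen (edgeRel Ω)

/-- `S` is a strongly connected component of `G_Ω`. -/
def IsSCC {n : ℕ} (Ω : Matrix (Fin n) (Fin n) ℝ) (S : Set (Fin n)) : Prop :=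
  S.Nonempty ∧ ∀ u ∈ S, ∀ v : Fin n, (v ∈ S ↔ (reaches Ω u v ∧ reaches Ω v u))

/-- A basin: a strongly connected component with no outgoing edges. -/
def IsBasin {n : ℕ} (Ω : Matrix (Fin n) (Fin n) ℝ) (S : Set (Fin n)) : Prop :=
  IsSCC Ω S ∧ ∀ j ∈ S, ∀ k : Fin n, k ∉ S → Ω k j = 0

/-- `N_B`: the union of all basins of `G_Ω`. -/
def basinUnion {n : ℕ} (Ω : Matrix (Fin n) (Fin n) ℝ) : Set (Fin n) :=
  {j | ∃ S : Set (Fin n), IsBasin Ω S ∧ j ∈ S}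

/-- A parent function encoding a forest of `Fin n` rooted in `N_B`: every fixed point
lies in `N_B` and every vertex iterates to a fixed point. -/
def IsForest {n : ℕ} (Ω : Matrix (Fin n) (Fin n) ℝ) (p : Fin n → Fin n) : Prop :=
  (∀ v : Fin n, p v = v → v ∈ basinUnion Ω) ∧
    ∀ v : Fin n, ∃ m : ℕ, p (p^[m] v) = p^[m] v

/-- The weight of a forest: the product of `Ω (p v) v` over its edges. -/
noncomputable def forestWt {n : ℕ} (Ω : Matrix (Fin n) (Fin n) ℝ) (p : Fin n → Fin n) : ℝ :=
  ∏ v ∈ Finset.univ.filter (fun v : Fin n => p v ≠ v), Ω (p v) v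

/-- The forest `p` attaches the vertex `l` to the basin `S`. -/
def attachesTo {n : ℕ} (p : Fin n → Fin n) (S : Set (Fin n)) (l : Fin n) : Prop :=
  ∃ m : ℕ, p^[m] l ∈ S

/-- `F`: the total weight of all forests of `Fin n` rooted in `N_B`. -/
noncomputable def forestTotal {n : ℕ} (Ω : Matrix (Fin n) (Fin n) ℝ) : ℝ :=
  ∑ p ∈ Finset.univ.filter (fun p : Fin n → Fin n => IsForest Ω p), forestWt Ω p

/-- `F_{η,l}`: the total weight of the forests rooted in `N_B` attaching `l` to basin `S`. -/
noncomputable def forestAttach {n : ℕ} (Ω : Matrix (Fin n) (Fin n) ℝ) (S : Set (Fin n))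
    (l : Fin n) : ℝ :=
  ∑ p ∈ Finset.univ.filter (fun p : Fin n → Fin n => IsForest Ω p ∧ attachesTo p S l),
    forestWt Ω p

/-- The constraint vector `κ_η` associated with the basin `S`. -/
noncomputable def kappa {n : ℕ} (Ω : Matrix (Fin n) (Fin n) ℝ) (S : Set (Fin n)) :
    Fin n → ℝ :=
  fun j => if j ∈ S then forestTotal Ω
    else if j ∈ basinUnion Ω then 0 else forestAttach Ω S j

section A
variable {n : ℕ} {Ω : Matrix (Fin n) (Fin n) ℝ}

lemma basin_edge_closed {S : Set (Fin n)} (hS : IsBasin Ω S) {j k : Fin n}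
    (hj : j ∈ S) (hjk : Ω k j ≠ 0) : k ∈ S := by
  by_contra h; exact hjk (hS.2 j hj k h)

lemma basin_reach_closed {S : Set (Fin n)} (hS : IsBasin Ω S) {j v : Fin n}
    (hj : j ∈ S) (h : reaches Ω j v) : v ∈ S := by
  induction h with
  | refl => exact hj
  | tail _ e ih => exact basin_edge_closed hS ih e.2

lemma scc_unique {S T : Set (Fin n)} (hS : IsSCC Ω S) (hT : IsSCC Ω T) {x : Fin n}
    (hxS : x ∈ S) (hxT : x ∈ T) : S = T := by
  ext v
  rw [hS.2 x hxS v, hT.2 x hxT v]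

/-- the SCC of a vertex -/
def comp (Ω : Matrix (Fin n) (Fin n) ℝ) (x : Fin n) : Set (Fin n) :=
  {v | reaches Ω x v ∧ reaches Ω v x}

lemma comp_isSCC (x : Fin n) : IsSCC Ω (comp Ω x) := by
  refine ⟨⟨x, Relation.ReflTransGen.refl, Relation.ReflTransGen.refl⟩, ?_⟩
  rintro u ⟨hxu, hux⟩ v
  constructor
  · rintro ⟨hxv, hvx⟩; exact ⟨hux.trans hxv, hvx.trans hxu⟩
  · rintro ⟨huv, hvu⟩; exact ⟨hxu.trans huv, hvu.trans hux⟩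

lemma mem_comp_self (x : Fin n) : x ∈ comp Ω x :=
  ⟨Relation.ReflTransGen.refl, Relation.ReflTransGen.refl⟩

/-- every vertex reaches the basin union -/
lemma reaches_basinUnion (v : Fin n) : ∃ w, reaches Ω v w ∧ w ∈ basinUnion Ω := by
  have key : ∀ (N : ℕ) (v : Fin n),
      (Finset.univ.filter (fun w => reaches Ω v w)).card ≤ N →
      ∃ w, reaches Ω v w ∧ w ∈ basinUnion Ω := by
    intro N
    induction N with
    | zero =>
      intro v hv
      exfalso
      have : v ∈ Finset.univ.filter (fun w => reaches Ω v w) := by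
        simp only [Finset.mem_filter, Finset.mem_univ, true_and]
        exact Relation.ReflTransGen.refl
      have := Finset.card_pos.mpr ⟨v, this⟩
      omega
    | succ N ih =>
      intro v hv
      by_cases hb : ∀ j ∈ comp Ω v, ∀ k : Fin n, k ∉ comp Ω v → Ω k j = 0
      · exact ⟨v, Relation.ReflTransGen.refl, ⟨comp Ω v, ⟨comp_isSCC v, hb⟩, mem_comp_self v⟩⟩
      · push_neg at hb
        obtain ⟨j, hj, k, hk, hkj⟩ := hb
        have hjk : edgeRel Ω j k := ⟨fun h => hk (h ▸ hj), hkj⟩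
        have hvk : reaches Ω v k := hj.1.trans (Relation.ReflTransGen.single hjk)
        have hkv : ¬ reaches Ω k v := fun h => hk ⟨hvk, h⟩
        have hsub : Finset.univ.filter (fun w => reaches Ω k w) ⊆
            (Finset.univ.filter (fun w => reaches Ω v w)).erase v := by
          intro w hw
          simp only [Finset.mem_filter, Finset.mem_erase, Finset.mem_univ, and_true] at hw ⊢
          refine ⟨?_, ⟨trivial, hvk.trans hw.2⟩⟩
          rintro rfl; exact hkv hw.2
        have hcard : (Finset.univ.filter (fun w => reaches Ω k w)).card ≤ N := by
          have h1 := Finset.card_le_card hsub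
          have h2 : ((Finset.univ.filter (fun w => reaches Ω v w)).erase v).card
              < (Finset.univ.filter (fun w => reaches Ω v w)).card := by
            apply Finset.card_erase_lt_of_mem
            simp only [Finset.mem_filter, Finset.mem_univ, true_and]
            exact Relation.ReflTransGen.refl
          omega
        obtain ⟨w, hw1, hw2⟩ := ih k hcard
        exact ⟨w, hvk.trans hw1, hw2⟩
  exact key _ v le_rfl

end A

section B
variable {n : ℕ} {Ω : Matrix (Fin n) (Fin n) ℝ}

/-- a trajectory never returns to a non-fixed starting point -/
lemma no_return {p : Fin n → Fin n} (hconv : ∀ v : Fin n, ∃ m : ℕ, p (p^[m] v) = p^[m] v)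
    {k : Fin n} (hk : p k ≠ k) : ∀ m, p^[m] (p k) ≠ k := by
  intro m hm
  have hcyc : p^[m + 1] k = k := by
    rw [Function.iterate_succ_apply]; exact hm
  obtain ⟨M, hM⟩ := hconv k
  have hiter : ∀ q : ℕ, p^[q * (m + 1)] k = k := by
    intro q
    induction q with
    | zero => simp
    | succ q ih => rw [Nat.succ_mul, Function.iterate_add_apply, hcyc, ih]
  set Q := (M + 1) * (m + 1) with hQ
  have hQM : M ≤ Q := by
    calc M ≤ M + 1 := Nat.le_succ M
    _ ≤ (M + 1) * (m + 1) := Nat.le_mul_of_pos_right _ (Nat.succ_pos m)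
  have hkfix : k = p^[M] k := by
    have h1 : p^[Q] k = k := hiter (M + 1)
    have h2 : p^[Q] k = p^[Q - M] (p^[M] k) := by
      rw [← Function.iterate_add_apply]
      congr 1; omega
    have h3 : p^[Q - M] (p^[M] k) = p^[M] k := Function.iterate_fixed hM _
    exact h1.symm.trans (h2.trans h3)
  apply hk
  calc p k = p (p^[M] k) := by rw [← hkfix]
  _ = p^[M] k := hM
  _ = k := hkfix.symm

/-- iterates agree as long as the p-trajectory avoids k -/
lemma iterate_update_eq {p : Fin n → Fin n} {k j u : Fin n} (h : ∀ m, p^[m] u ≠ k) :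
    ∀ m, (Function.update p k j)^[m] u = p^[m] u := by
  intro m
  induction m with
  | zero => rfl
  | succ m ih =>
    rw [Function.iterate_succ_apply', Function.iterate_succ_apply', ih,
      Function.update_of_ne (h m)]

lemma iterate_eq_of_avoid {p : Fin n → Fin n} {k j : Fin n} (h : ∀ m, p^[m] j ≠ k) :
    ∀ m, (Function.update p k j)^[m] j = p^[m] j := iterate_update_eq h

/-- iterates agree up to the first hit of k -/
lemma iterate_eq_upto {p : Fin n → Fin n} {k j v : Fin n} {m₀ : ℕ}
    (h : ∀ i, i < m₀ → p^[i] v ≠ k) :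
    ∀ m, m ≤ m₀ → (Function.update p k j)^[m] v = p^[m] v := by
  intro m hm
  induction m with
  | zero => rfl
  | succ m ih =>
    rw [Function.iterate_succ_apply', Function.iterate_succ_apply',
      ih (Nat.le_of_succ_le hm), Function.update_of_ne (h m (Nat.lt_of_succ_le hm))]

/-- the redirected parent function is still a forest -/
lemma update_isForest {p : Fin n → Fin n} (hp : IsForest Ω p) {k j : Fin n}
    (hk : k ∉ basinUnion Ω) (hjk : j ≠ k) (havoid : ∀ m, p^[m] j ≠ k) :
    IsForest Ω (Function.update p k j) := by
  have hpk : p k ≠ k := fun h => hk (hp.1 k h)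
  constructor
  · intro v hv
    by_cases hvk : v = k
    · subst hvk
      rw [Function.update_self] at hv
      exact absurd hv hjk
    · rw [Function.update_of_ne hvk] at hv
      exact hp.1 v hv
  · intro v
    have hjconv : ∃ m : ℕ, (Function.update p k j) ((Function.update p k j)^[m] j)
        = (Function.update p k j)^[m] j := by
      obtain ⟨m, hm⟩ := hp.2 j
      refine ⟨m, ?_⟩
      rw [iterate_eq_of_avoid havoid, Function.update_of_ne (havoid m), hm]
    by_cases hhit : ∃ m, p^[m] v = k
    · obtain ⟨m, hjm⟩ := hjconv
      have hne : ∀ i, i < Nat.find hhit → p^[i] v ≠ k := fun i hi => Nat.find_min hhit hi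
      have hupto : (Function.update p k j)^[Nat.find hhit] v = k := by
        rw [iterate_eq_upto hne _ le_rfl]; exact Nat.find_spec hhit
      refine ⟨m + 1 + Nat.find hhit, ?_⟩
      have h0 : (Function.update p k j)^[m + 1 + Nat.find hhit] v
          = (Function.update p k j)^[m + 1] k := by
        rw [Function.iterate_add_apply, hupto]
      have h1 : (Function.update p k j)^[m + 1] k = (Function.update p k j)^[m] j := by
        rw [Function.iterate_add_apply, Function.iterate_one, Function.update_self]
      rw [h0, h1]; exact hjm
    · push_neg at hhit
      obtain ⟨m, hm⟩ := hp.2 v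
      refine ⟨m, ?_⟩
      have heq : ∀ i, (Function.update p k j)^[i] v = p^[i] v := by
        intro i
        induction i with
        | zero => rfl
        | succ i ih =>
          rw [Function.iterate_succ_apply', Function.iterate_succ_apply', ih,
            Function.update_of_ne (hhit i)]
      rw [heq, Function.update_of_ne (hhit m), hm]

end B

section C
variable {n : ℕ} {Ω : Matrix (Fin n) (Fin n) ℝ}

lemma forestWt_nonneg (hoff : ∀ j k : Fin n, j ≠ k → 0 ≤ Ω j k) (p : Fin n → Fin n) :
    0 ≤ forestWt Ω p := by
  apply Finset.prod_nonneg
  intro v hv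
  rw [Finset.mem_filter] at hv
  exact hoff _ _ hv.2

lemma forestWt_factor_ne {p : Fin n → Fin n} (hw : forestWt Ω p ≠ 0) {v : Fin n}
    (hv : p v ≠ v) : Ω (p v) v ≠ 0 := by
  rw [forestWt, Finset.prod_ne_zero_iff] at hw
  exact hw v (by simp [hv])

lemma basin_step {p : Fin n → Fin n} (hw : forestWt Ω p ≠ 0) {S : Set (Fin n)}
    (hS : IsBasin Ω S) {v : Fin n} (hv : v ∈ S) : p v ∈ S := by
  by_cases h : p v = v
  · rw [h]; exact hv
  · exact basin_edge_closed hS hv (forestWt_factor_ne hw h)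

lemma basin_iter {p : Fin n → Fin n} (hw : forestWt Ω p ≠ 0) {S : Set (Fin n)}
    (hS : IsBasin Ω S) {v : Fin n} (hv : v ∈ S) : ∀ i, p^[i] v ∈ S := by
  intro i
  induction i with
  | zero => exact hv
  | succ i ih => rw [Function.iterate_succ_apply']; exact basin_step hw hS ih

lemma basins_disjoint {S T : Set (Fin n)} (hS : IsBasin Ω S) (hT : IsBasin Ω T)
    (hne : S ≠ T) : S ∩ T = ∅ := by
  by_contra h
  obtain ⟨x, hxS, hxT⟩ := Set.nonempty_iff_ne_empty.mpr h
  exact hne (scc_unique hS.1 hT.1 hxS hxT)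

lemma attach_total {S : Set (Fin n)} {j : Fin n} (hj : j ∈ S) :
    forestAttach Ω S j = forestTotal Ω := by
  unfold forestAttach forestTotal
  congr 1
  apply Finset.filter_congr
  intro p _
  simp only [iff_self_and, and_iff_left_iff_imp]
  intro _
  exact ⟨0, hj⟩

lemma attach_zero {S : Set (Fin n)} (hS : IsBasin Ω S) {j : Fin n}
    (hjB : j ∈ basinUnion Ω) (hjS : j ∉ S) : forestAttach Ω S j = 0 := by
  apply Finset.sum_eq_zero
  intro p hp
  rw [Finset.mem_filter] at hp
  obtain ⟨T, hT, hjT⟩ := hjB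
  by_contra hw
  obtain ⟨m, hm⟩ := hp.2.2
  have hST : S ≠ T := fun h => hjS (h ▸ hjT)
  have : p^[m] j ∈ T := basin_iter hw hT hjT m
  have : p^[m] j ∈ S ∩ T := ⟨hm, this⟩
  rw [basins_disjoint hS hT hST] at this
  exact this

lemma kappa_eq_attach {S : Set (Fin n)} (hS : IsBasin Ω S) :
    kappa Ω S = forestAttach Ω S := by
  funext j
  unfold kappa
  by_cases hjS : j ∈ S
  · rw [if_pos hjS, attach_total hjS]
  · rw [if_neg hjS]
    by_cases hjB : j ∈ basinUnion Ω
    · rw [if_pos hjB, attach_zero hS hjB hjS]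
    · rw [if_neg hjB]

end C

section D
variable {n : ℕ} {Ω : Matrix (Fin n) (Fin n) ℝ}

lemma exists_pos_forest (hoff : ∀ j k : Fin n, j ≠ k → 0 ≤ Ω j k) :
    ∃ p : Fin n → Fin n, IsForest Ω p ∧ 0 < forestWt Ω p := by
  classical
  -- layered sets approaching the basin union
  let L : ℕ → Set (Fin n) := fun m => Nat.rec (basinUnion Ω)
    (fun _ Lm => Lm ∪ {v | ∃ w ∈ Lm, edgeRel Ω v w}) m
  have hLs : ∀ m, L (m + 1) = L m ∪ {v | ∃ w ∈ L m, edgeRel Ω v w} := fun m => rfl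
  have hmem : ∀ v : Fin n, ∃ m, v ∈ L m := by
    intro v
    obtain ⟨w, hvw, hwB⟩ := reaches_basinUnion (Ω := Ω) v
    induction hvw using Relation.ReflTransGen.head_induction_on with
    | refl => exact ⟨0, hwB⟩
    | head e _ ih =>
      obtain ⟨m, hm⟩ := ih
      exact ⟨m + 1, Or.inr ⟨_, hm, e⟩⟩
  have hmin : ∀ v : Fin n, ∃ m, v ∈ L m ∧ ∀ i, i < m → v ∉ L i := by
    intro v
    obtain ⟨m, hm, hmn⟩ := Nat.lt_wfRel.wf.has_min {m | v ∈ L m} (hmem v)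
    exact ⟨m, hm, fun i hi hvi => hmn i hvi hi⟩
  choose d hd1 hd2 using hmin
  have hstep : ∀ v : Fin n, ∃ w : Fin n,
      (v ∈ basinUnion Ω ∧ w = v) ∨
      (v ∉ basinUnion Ω ∧ edgeRel Ω v w ∧ d w < d v) := by
    intro v
    by_cases hv : v ∈ basinUnion Ω
    · exact ⟨v, Or.inl ⟨hv, rfl⟩⟩
    · have hdv : v ∈ L (d v) := hd1 v
      rcases hd0 : d v with _ | m
      · exfalso; rw [hd0] at hdv; exact hv hdv
      · rw [hd0, hLs] at hdv
        have hnot : v ∉ L m := hd2 v m (by omega)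
        rcases hdv with h | ⟨w, hwm, hew⟩
        · exact absurd h hnot
        · refine ⟨w, Or.inr ⟨hv, hew, ?_⟩⟩
          have h1 : d w ≤ m := by
            by_contra hc
            exact hd2 w m (by omega) hwm
          omega
  choose p hp using hstep
  have hfix : ∀ v, v ∈ basinUnion Ω → p v = v := by
    intro v hv
    rcases hp v with ⟨_, h⟩ | ⟨h, _⟩
    · exact h
    · exact absurd hv h
  have hmove : ∀ v, v ∉ basinUnion Ω → edgeRel Ω v (p v) ∧ d (p v) < d v := by
    intro v hv
    rcases hp v with ⟨h, _⟩ | ⟨_, h⟩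
    · exact absurd h hv
    · exact h
  have hforest : IsForest Ω p := by
    constructor
    · intro v hv
      by_contra hvB
      exact ((hmove v hvB).1).1 hv.symm
    · have conv : ∀ (N : ℕ) (v : Fin n), d v ≤ N → ∃ m, p (p^[m] v) = p^[m] v := by
        intro N
        induction N with
        | zero =>
          intro v hv
          by_cases hvB : v ∈ basinUnion Ω
          · exact ⟨0, by simpa using hfix v hvB⟩
          · exfalso
            have hdv : v ∈ L (d v) := hd1 v
            have h0 : d v = 0 := Nat.le_zero.mp hv
            rw [h0] at hdv
            exact hvB hdv
        | succ N ih =>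
          intro v hv
          by_cases hvB : v ∈ basinUnion Ω
          · exact ⟨0, by simpa using hfix v hvB⟩
          · have hd := (hmove v hvB).2
            obtain ⟨m, hm⟩ := ih (p v) (by omega)
            exact ⟨m + 1, by rw [Function.iterate_succ_apply]; exact hm⟩
      intro v; exact conv (d v) v le_rfl
  refine ⟨p, hforest, ?_⟩
  apply Finset.prod_pos
  intro v hv
  rw [Finset.mem_filter] at hv
  have hvB : v ∉ basinUnion Ω := fun h => hv.2 (hfix v h)
  obtain ⟨⟨hne, hΩ⟩, _⟩ := hmove v hvB
  exact lt_of_le_of_ne (hoff _ _ hv.2) (Ne.symm hΩ)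

lemma forestTotal_pos (hoff : ∀ j k : Fin n, j ≠ k → 0 ≤ Ω j k) :
    0 < forestTotal Ω := by
  obtain ⟨p, hp, hw⟩ := exists_pos_forest hoff
  apply Finset.sum_pos'
  · intro q _; exact forestWt_nonneg hoff q
  · exact ⟨p, by simp [hp], hw⟩

end D

section E
variable {n : ℕ} {Ω : Matrix (Fin n) (Fin n) ℝ}

lemma basin_subset {S : Set (Fin n)} (hS : IsBasin Ω S) : S ⊆ basinUnion Ω :=
  fun x hx => ⟨S, hS, hx⟩

/-- core facts about the edge-swap at `k` -/
lemma swap_core (hkB : k ∉ basinUnion Ω) {p : Fin n → Fin n} {j : Fin n}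
    (hp : IsForest Ω p) (hw : forestWt Ω p ≠ 0) (hjk : j ≠ k)
    (hΩjk : Ω j k ≠ 0) (hnohit : ∀ m, p^[m] j ≠ k) :
    IsForest Ω (Function.update p k j) ∧ p k ≠ k ∧ Ω (p k) k ≠ 0 ∧
      forestWt Ω (Function.update p k j) ≠ 0 ∧
      Ω j k * forestWt Ω p = Ω (p k) k * forestWt Ω (Function.update p k j) := by
  have hpk : p k ≠ k := fun h => hkB (hp.1 k h)
  have hforest : IsForest Ω (Function.update p k j) := update_isForest hp hkB hjk hnohit
  have hΩpk : Ω (p k) k ≠ 0 := forestWt_factor_ne hw hpk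
  -- weight factorization
  have hkmem : k ∈ Finset.univ.filter (fun v => p v ≠ v) := by simp [hpk]
  have hkmem' : k ∈ Finset.univ.filter (fun v => Function.update p k j v ≠ v) := by
    simp [Function.update_self, hjk]
  have hsetE : Finset.univ.filter (fun v => Function.update p k j v ≠ v)
      = Finset.univ.filter (fun v => p v ≠ v) := by
    ext v
    simp only [Finset.mem_filter, Finset.mem_univ, true_and]
    by_cases hv : v = k
    · subst hv; rw [Function.update_self]
      exact ⟨fun _ => hpk, fun _ => hjk⟩
    · rw [Function.update_of_ne hv]
  have hprod : ∀ v ∈ (Finset.univ.filter (fun v => p v ≠ v)).erase k,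
      Ω (Function.update p k j v) v = Ω (p v) v := by
    intro v hv
    rw [Function.update_of_ne (Finset.mem_erase.mp hv).1]
  have hwp : forestWt Ω p
      = Ω (p k) k * ∏ v ∈ (Finset.univ.filter (fun v => p v ≠ v)).erase k, Ω (p v) v := by
    rw [forestWt, ← Finset.mul_prod_erase _ _ hkmem]
  have hwp' : forestWt Ω (Function.update p k j)
      = Ω j k * ∏ v ∈ (Finset.univ.filter (fun v => p v ≠ v)).erase k, Ω (p v) v := by
    rw [forestWt, ← Finset.mul_prod_erase _ _ hkmem', Function.update_self]
    congr 1
    · rw [hsetE]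
      apply Finset.prod_congr rfl
      exact hprod
  have hW : (∏ v ∈ (Finset.univ.filter (fun v => p v ≠ v)).erase k, Ω (p v) v) ≠ 0 := by
    intro h
    rw [hwp, h, mul_zero] at hw
    exact hw rfl
  refine ⟨hforest, hpk, hΩpk, ?_, ?_⟩
  · rw [hwp']
    exact mul_ne_zero hΩjk hW
  · rw [hwp, hwp']; ring

end E

section F
variable {n : ℕ} {Ω : Matrix (Fin n) (Fin n) ℝ}

lemma attach_swap_fwd {p : Fin n → Fin n} {S : Set (Fin n)} {j k : Fin n}
    (hnohit : ∀ m, p^[m] j ≠ k) (hatt : attachesTo p S j) :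
    attachesTo (Function.update p k j) S k := by
  obtain ⟨m, hm⟩ := hatt
  refine ⟨m + 1, ?_⟩
  rw [Function.iterate_succ_apply, Function.update_self, iterate_update_eq hnohit]
  exact hm

lemma attach_swap_bwd {p : Fin n → Fin n} {S : Set (Fin n)} {j k : Fin n}
    (hS : IsBasin Ω S) (hkB : k ∉ basinUnion Ω) (hp : IsForest Ω p)
    (hatt : attachesTo p S k) :
    attachesTo (Function.update p k j) S (p k) := by
  have hpk : p k ≠ k := fun h => hkB (hp.1 k h)
  have hnr : ∀ m, p^[m] (p k) ≠ k := no_return hp.2 hpk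
  obtain ⟨m, hm⟩ := hatt
  rcases m with _ | m'
  · exact absurd (basin_subset hS hm) hkB
  · refine ⟨m', ?_⟩
    rw [iterate_update_eq hnr]
    rw [Function.iterate_succ_apply] at hm
    exact hm

lemma attach_hit_fwd {p : Fin n → Fin n} {S : Set (Fin n)} {j k : Fin n}
    (hS : IsBasin Ω S) (hkB : k ∉ basinUnion Ω) (hw : forestWt Ω p ≠ 0)
    {m₀ : ℕ} (hhit : p^[m₀] j = k) (hatt : attachesTo p S j) :
    attachesTo p S k := by
  obtain ⟨m₁, hm₁⟩ := hatt
  rcases le_or_gt m₁ m₀ with h | h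
  · exfalso
    have hkS : k ∈ S := by
      rw [← hhit]
      have : p^[m₀] j = p^[m₀ - m₁] (p^[m₁] j) := by
        rw [← Function.iterate_add_apply]
        congr 1; omega
      rw [this]
      exact basin_iter hw hS hm₁ _
    exact hkB (basin_subset hS hkS)
  · refine ⟨m₁ - m₀, ?_⟩
    rw [← hhit, ← Function.iterate_add_apply]
    have : m₁ - m₀ + m₀ = m₁ := by omega
    rw [this]
    exact hm₁

lemma attach_hit_bwd {p : Fin n → Fin n} {S : Set (Fin n)} {j k : Fin n}
    {m₀ : ℕ} (hhit : p^[m₀] j = k) (hatt : attachesTo p S k) :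
    attachesTo p S j := by
  obtain ⟨m, hm⟩ := hatt
  refine ⟨m + m₀, ?_⟩
  rw [Function.iterate_add_apply, hhit]
  exact hm

end F

section G
variable {n : ℕ} {Ω : Matrix (Fin n) (Fin n) ℝ}

/-- The edge-swap involution on (vertex, forest) pairs. -/
noncomputable def swapAt {n : ℕ} (k : Fin n) :
    (Σ _ : Fin n, (Fin n → Fin n)) → (Σ _ : Fin n, (Fin n → Fin n)) :=
  fun x => if ∃ m : ℕ, x.2^[m] x.1 = k then x else ⟨x.2 k, Function.update x.2 k x.1⟩

lemma swapAt_invol {k : Fin n} (hkB : k ∉ basinUnion Ω) {p : Fin n → Fin n} {j : Fin n}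
    (hp : IsForest Ω p) (hjk : j ≠ k) :
    swapAt k (swapAt k (⟨j, p⟩ : Σ _ : Fin n, (Fin n → Fin n))) = ⟨j, p⟩ := by
  by_cases hhit : ∃ m : ℕ, p^[m] j = k
  · have e : swapAt k (⟨j, p⟩ : Σ _ : Fin n, (Fin n → Fin n)) = ⟨j, p⟩ := by
      simp only [swapAt]
      rw [if_pos hhit]
    rw [e, e]
  · have hpk : p k ≠ k := fun h => hkB (hp.1 k h)
    have hnr : ∀ m, p^[m] (p k) ≠ k := no_return hp.2 hpk
    have h2 : ¬ ∃ m : ℕ, (Function.update p k j)^[m] (p k) = k := by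
      rintro ⟨m, hm⟩
      rw [iterate_update_eq hnr] at hm
      exact hnr m hm
    have e1 : swapAt k (⟨j, p⟩ : Σ _ : Fin n, (Fin n → Fin n))
        = ⟨p k, Function.update p k j⟩ := by
      simp only [swapAt]
      rw [if_neg hhit]
    have e2 : swapAt k (⟨p k, Function.update p k j⟩ : Σ _ : Fin n, (Fin n → Fin n))
        = ⟨j, p⟩ := by
      simp only [swapAt]
      rw [if_neg h2]
      simp only [Function.update_self, Function.update_idem, Function.update_eq_self]
    rw [e1, e2]

lemma harmonic_attach (hoff : ∀ j k : Fin n, j ≠ k → 0 ≤ Ω j k)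
    (hcol : ∀ k : Fin n, ∑ j, Ω j k = 0) {S : Set (Fin n)} (hS : IsBasin Ω S) (k : Fin n) :
    ∑ j, Ω j k * forestAttach Ω S j = 0 := by
  classical
  by_cases hkB : k ∈ basinUnion Ω
  · -- k lies in some basin T; forestAttach is constant on edges out of k
    obtain ⟨T, hT, hkT⟩ := hkB
    have hconst : ∀ j : Fin n, Ω j k ≠ 0 → forestAttach Ω S j = forestAttach Ω S k := by
      intro j hj
      have hjT : j ∈ T := basin_edge_closed hT hkT hj
      by_cases hST : S = T
      · subst hST
        rw [attach_total hjT, attach_total hkT]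
      · have hd := basins_disjoint hS hT hST
        have hjS : j ∉ S := fun h => by
          have : j ∈ S ∩ T := ⟨h, hjT⟩
          rw [hd] at this; exact this
        have hkS : k ∉ S := fun h => by
          have : k ∈ S ∩ T := ⟨h, hkT⟩
          rw [hd] at this; exact this
        rw [attach_zero hS (basin_subset hT hjT) hjS,
          attach_zero hS (basin_subset hT hkT) hkS]
    calc ∑ j, Ω j k * forestAttach Ω S j
        = ∑ j, Ω j k * forestAttach Ω S k := by
          apply Finset.sum_congr rfl
          intro j _
          by_cases hj : Ω j k = 0
          · rw [hj, zero_mul, zero_mul]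
          · rw [hconst j hj]
      _ = (∑ j, Ω j k) * forestAttach Ω S k := (Finset.sum_mul _ _ _).symm
      _ = 0 := by rw [hcol k, zero_mul]
  · -- k is not in any basin: the edge-swap bijection
    -- inner rewriting of a weighted attach-sum as a sum over nonzero pairs
    have inner : ∀ (j : Fin n) (c : (Fin n → Fin n) → Prop),
        Ω j k * (∑ p ∈ Finset.univ.filter c, forestWt Ω p)
        = ∑ p ∈ Finset.univ.filter (fun p => c p ∧ Ω j k * forestWt Ω p ≠ 0),
            Ω j k * forestWt Ω p := by
      intro j c
      rw [Finset.mul_sum, ← Finset.filter_filter,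
        Finset.sum_filter_ne_zero]
    set SA : Finset (Σ _ : Fin n, (Fin n → Fin n)) :=
      (Finset.univ.erase k).sigma (fun j => Finset.univ.filter
        (fun p => (IsForest Ω p ∧ attachesTo p S j) ∧ Ω j k * forestWt Ω p ≠ 0)) with hSA
    set SB : Finset (Σ _ : Fin n, (Fin n → Fin n)) :=
      (Finset.univ.erase k).sigma (fun j => Finset.univ.filter
        (fun p => (IsForest Ω p ∧ attachesTo p S k) ∧ Ω j k * forestWt Ω p ≠ 0)) with hSB
    have main : ∑ x ∈ SA, Ω x.1 k * forestWt Ω x.2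
        = ∑ x ∈ SB, Ω x.1 k * forestWt Ω x.2 := by
      apply Finset.sum_bij' (i := fun x _ => swapAt k x) (j := fun x _ => swapAt k x)
      · -- SA → SB
        rintro ⟨j, p⟩ ha
        rw [hSA, Finset.mem_sigma, Finset.mem_erase, Finset.mem_filter] at ha
        obtain ⟨⟨hjk, -⟩, -, ⟨hfor, hatt⟩, hz⟩ := ha
        obtain ⟨hΩjk, hw⟩ := mul_ne_zero_iff.mp hz
        rw [hSB, Finset.mem_sigma, Finset.mem_erase, Finset.mem_filter]
        by_cases hhit : ∃ m : ℕ, p^[m] j = k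
        · rw [swapAt, if_pos hhit]
          obtain ⟨m₀, hm₀⟩ := hhit
          exact ⟨⟨hjk, Finset.mem_univ _⟩, Finset.mem_univ _,
            ⟨hfor, attach_hit_fwd hS hkB hw hm₀ hatt⟩, hz⟩
        · push_neg at hhit
          obtain ⟨hfor', hpk, hΩpk, hw', hweq⟩ := swap_core hkB hfor hw hjk hΩjk hhit
          rw [swapAt, if_neg (by push_neg; exact fun m => hhit m)]
          exact ⟨⟨hpk, Finset.mem_univ _⟩, Finset.mem_univ _,
            ⟨hfor', attach_swap_fwd hhit hatt⟩, mul_ne_zero hΩpk hw'⟩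
      · -- SB → SA
        rintro ⟨j, p⟩ hb
        rw [hSB, Finset.mem_sigma, Finset.mem_erase, Finset.mem_filter] at hb
        obtain ⟨⟨hjk, -⟩, -, ⟨hfor, hatt⟩, hz⟩ := hb
        obtain ⟨hΩjk, hw⟩ := mul_ne_zero_iff.mp hz
        rw [hSA, Finset.mem_sigma, Finset.mem_erase, Finset.mem_filter]
        by_cases hhit : ∃ m : ℕ, p^[m] j = k
        · rw [swapAt, if_pos hhit]
          obtain ⟨m₀, hm₀⟩ := hhit
          exact ⟨⟨hjk, Finset.mem_univ _⟩, Finset.mem_univ _,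
            ⟨hfor, attach_hit_bwd hm₀ hatt⟩, hz⟩
        · push_neg at hhit
          obtain ⟨hfor', hpk, hΩpk, hw', hweq⟩ := swap_core hkB hfor hw hjk hΩjk hhit
          rw [swapAt, if_neg (by push_neg; exact fun m => hhit m)]
          exact ⟨⟨hpk, Finset.mem_univ _⟩, Finset.mem_univ _,
            ⟨hfor', attach_swap_bwd hS hkB hfor hatt⟩, mul_ne_zero hΩpk hw'⟩
      · -- left inverse
        rintro ⟨j, p⟩ ha
        rw [hSA, Finset.mem_sigma, Finset.mem_erase, Finset.mem_filter] at ha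
        exact swapAt_invol hkB ha.2.2.1.1 ha.1.1
      · -- right inverse
        rintro ⟨j, p⟩ hb
        rw [hSB, Finset.mem_sigma, Finset.mem_erase, Finset.mem_filter] at hb
        exact swapAt_invol hkB hb.2.2.1.1 hb.1.1
      · -- values agree
        rintro ⟨j, p⟩ ha
        rw [hSA, Finset.mem_sigma, Finset.mem_erase, Finset.mem_filter] at ha
        obtain ⟨⟨hjk, -⟩, -, ⟨hfor, hatt⟩, hz⟩ := ha
        obtain ⟨hΩjk, hw⟩ := mul_ne_zero_iff.mp hz
        by_cases hhit : ∃ m : ℕ, p^[m] j = k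
        · rw [swapAt, if_pos hhit]
        · push_neg at hhit
          obtain ⟨hfor', hpk, hΩpk, hw', hweq⟩ := swap_core hkB hfor hw hjk hΩjk hhit
          rw [swapAt, if_neg (by push_neg; exact fun m => hhit m)]
          exact hweq
    have h1 : ∑ j ∈ Finset.univ.erase k, Ω j k * forestAttach Ω S j
        = ∑ x ∈ SA, Ω x.1 k * forestWt Ω x.2 := by
      rw [hSA, Finset.sum_sigma]
      apply Finset.sum_congr rfl
      intro j _
      dsimp only
      rw [forestAttach, Finset.mul_sum]
      conv_rhs => rw [← Finset.filter_filter, Finset.sum_filter_ne_zero]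
    have h2 : ∑ j ∈ Finset.univ.erase k, Ω j k * forestAttach Ω S k
        = ∑ x ∈ SB, Ω x.1 k * forestWt Ω x.2 := by
      rw [hSB, Finset.sum_sigma]
      apply Finset.sum_congr rfl
      intro j _
      dsimp only
      rw [forestAttach, Finset.mul_sum]
      conv_rhs => rw [← Finset.filter_filter, Finset.sum_filter_ne_zero]
    have key : ∑ j ∈ Finset.univ.erase k, Ω j k * forestAttach Ω S j
        = ∑ j ∈ Finset.univ.erase k, Ω j k * forestAttach Ω S k := by
      rw [h1, main, ← h2]
    calc ∑ j, Ω j k * forestAttach Ω S j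
        = Ω k k * forestAttach Ω S k
          + ∑ j ∈ Finset.univ.erase k, Ω j k * forestAttach Ω S j :=
          (Finset.add_sum_erase _ _ (Finset.mem_univ k)).symm
      _ = Ω k k * forestAttach Ω S k
          + ∑ j ∈ Finset.univ.erase k, Ω j k * forestAttach Ω S k := by rw [key]
      _ = (Ω k k + ∑ j ∈ Finset.univ.erase k, Ω j k) * forestAttach Ω S k := by
          rw [add_mul, Finset.sum_mul]
      _ = (∑ j, Ω j k) * forestAttach Ω S k := by
          rw [Finset.add_sum_erase Finset.univ (fun j => Ω j k) (Finset.mem_univ k)]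
      _ = 0 := by rw [hcol k, zero_mul]

end G

section H
variable {n : ℕ} {Ω : Matrix (Fin n) (Fin n) ℝ}

lemma max_propagate (hoff : ∀ j k : Fin n, j ≠ k → 0 ≤ Ω j k)
    (hcol : ∀ k : Fin n, ∑ j, Ω j k = 0) {x : Fin n → ℝ}
    (hx : ∀ k, ∑ j, Ω j k * x j = 0) {M : ℝ} {w : Fin n} (hw : x w = M)
    (hmax : ∀ j, Ω j w ≠ 0 → x j ≤ M) : ∀ j, Ω j w ≠ 0 → x j = M := by
  have h2 : ∑ j, Ω j w * M = 0 := by rw [← Finset.sum_mul, hcol w, zero_mul]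
  have hsum : ∑ j, Ω j w * (x j - M) = 0 := by
    have he : ∀ j : Fin n, Ω j w * (x j - M) = Ω j w * x j - Ω j w * M := fun j => by ring
    rw [Finset.sum_congr rfl (fun j _ => he j), Finset.sum_sub_distrib, hx w, h2, sub_zero]
  have hterm : ∀ j ∈ Finset.univ, Ω j w * (x j - M) ≤ 0 := by
    intro j _
    by_cases hj : Ω j w = 0
    · rw [hj, zero_mul]
    · by_cases hjw : j = w
      · subst hjw; rw [hw]; simp
      · have h1 := hoff j w hjw
        have h3 := hmax j hj
        have h4 : x j - M ≤ 0 := by linarith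
        exact mul_nonpos_of_nonneg_of_nonpos h1 h4
  have hall := (Finset.sum_eq_zero_iff_of_nonpos hterm).mp hsum
  intro j hj
  have h0 := hall j (Finset.mem_univ j)
  rcases mul_eq_zero.mp h0 with h | h
  · exact absurd h hj
  · have := sub_eq_zero.mp h
    exact this

lemma harmonic_const_on_basin (hoff : ∀ j k : Fin n, j ≠ k → 0 ≤ Ω j k)
    (hcol : ∀ k : Fin n, ∑ j, Ω j k = 0) {x : Fin n → ℝ}
    (hx : ∀ k, ∑ j, Ω j k * x j = 0) {S : Set (Fin n)} (hS : IsBasin Ω S)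
    {u v : Fin n} (hu : u ∈ S) (hv : v ∈ S) : x u = x v := by
  obtain ⟨u₀, hu₀S, hmax⟩ := Set.exists_max_image S x (Set.toFinite S) ⟨u, hu⟩
  have key : ∀ v' : Fin n, reaches Ω u₀ v' → v' ∈ S ∧ x v' = x u₀ := by
    intro v' h
    induction h with
    | refl => exact ⟨hu₀S, rfl⟩
    | tail _ e ih =>
      obtain ⟨hwS, hwx⟩ := ih
      have hvS := basin_edge_closed hS hwS e.2
      refine ⟨hvS, ?_⟩
      exact max_propagate hoff hcol hx hwx
        (fun j hj => hmax j (basin_edge_closed hS hwS hj)) _ e.2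
  have h1 := key u ((hS.1.2 u₀ hu₀S u).mp hu).1
  have h2 := key v ((hS.1.2 u₀ hu₀S v).mp hv).1
  rw [h1.2, h2.2]

lemma harmonic_nonpos (hoff : ∀ j k : Fin n, j ≠ k → 0 ≤ Ω j k)
    (hcol : ∀ k : Fin n, ∑ j, Ω j k = 0) {y : Fin n → ℝ}
    (hy : ∀ k, ∑ j, Ω j k * y j = 0) (hz : ∀ v ∈ basinUnion Ω, y v = 0)
    (v : Fin n) : y v ≤ 0 := by
  obtain ⟨u₀, -, hmax⟩ := Finset.exists_max_image Finset.univ y ⟨v, Finset.mem_univ v⟩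
  have key : ∀ w : Fin n, reaches Ω u₀ w → y w = y u₀ := by
    intro w h
    induction h with
    | refl => rfl
    | tail _ e ih =>
      exact max_propagate hoff hcol hy ih
        (fun j _ => hmax j (Finset.mem_univ j)) _ e.2
  obtain ⟨w, hw, hwB⟩ := reaches_basinUnion (Ω := Ω) u₀
  have h0 : y u₀ = 0 := by rw [← key w hw]; exact hz w hwB
  calc y v ≤ y u₀ := hmax v (Finset.mem_univ v)
    _ = 0 := h0

lemma harmonic_vanish (hoff : ∀ j k : Fin n, j ≠ k → 0 ≤ Ω j k)
    (hcol : ∀ k : Fin n, ∑ j, Ω j k = 0) {y : Fin n → ℝ}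
    (hy : ∀ k, ∑ j, Ω j k * y j = 0) (hz : ∀ v ∈ basinUnion Ω, y v = 0) :
    y = 0 := by
  funext v
  have h1 := harmonic_nonpos hoff hcol hy hz v
  have hy' : ∀ k, ∑ j, Ω j k * (-y) j = 0 := by
    intro k
    simp only [Pi.neg_apply, mul_neg]
    rw [Finset.sum_neg_distrib, hy k, neg_zero]
  have hz' : ∀ v ∈ basinUnion Ω, (-y) v = 0 := by
    intro v hv; simp [hz v hv]
  have h2 := harmonic_nonpos hoff hcol hy' hz' v
  simp only [Pi.neg_apply, neg_nonpos] at h2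
  have : y v = 0 := le_antisymm h1 h2
  simpa using this

end H

theorem stmt8 (n : ℕ) (Ω : Matrix (Fin n) (Fin n) ℝ)
    (hoff : ∀ j k : Fin n, j ≠ k → 0 ≤ Ω j k)
    (hcol : ∀ k : Fin n, ∑ j, Ω j k = 0) :
    (∀ S : Set (Fin n), IsBasin Ω S → Ωᵀ.mulVec (kappa Ω S) = 0) ∧
    LinearIndependent ℝ (fun η : {S : Set (Fin n) // IsBasin Ω S} => kappa Ω η.1) ∧
    Submodule.span ℝ (Set.range fun η : {S : Set (Fin n) // IsBasin Ω S} => kappa Ω η.1) =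
      LinearMap.ker (Ωᵀ).mulVecLin := by
  classical
  have hF : 0 < forestTotal Ω := forestTotal_pos hoff
  have hkh : ∀ (S : Set (Fin n)), IsBasin Ω S → ∀ k, ∑ j, Ω j k * kappa Ω S j = 0 := by
    intro S hS k
    rw [kappa_eq_attach hS]
    exact harmonic_attach hoff hcol hS k
  have hmv : ∀ (S : Set (Fin n)), IsBasin Ω S → Ωᵀ.mulVec (kappa Ω S) = 0 := by
    intro S hS
    funext k
    simp only [Matrix.mulVec, dotProduct, Matrix.transpose_apply, Pi.zero_apply]
    exact hkh S hS k
  have hval : ∀ (η μ : {S : Set (Fin n) // IsBasin Ω S}) (s : Fin n), s ∈ η.1 →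
      kappa Ω μ.1 s = if μ = η then forestTotal Ω else 0 := by
    intro η μ s hs
    by_cases hμη : μ = η
    · subst hμη; rw [if_pos rfl, kappa, if_pos hs]
    · rw [if_neg hμη, kappa]
      have hsμ : s ∉ μ.1 := by
        intro hsμ
        exact hμη (Subtype.ext (scc_unique μ.2.1 η.2.1 hsμ hs))
      rw [if_neg hsμ, if_pos (basin_subset η.2 hs)]
  refine ⟨hmv, ?_, ?_⟩
  · rw [Fintype.linearIndependent_iff]
    intro g hg η
    have hsη : η.1.Nonempty := η.2.1.1
    have hcf := congrFun hg hsη.some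
    rw [Finset.sum_apply] at hcf
    simp only [Pi.smul_apply, smul_eq_mul, Pi.zero_apply] at hcf
    have hsum : ∑ μ : {S : Set (Fin n) // IsBasin Ω S}, g μ * kappa Ω μ.1 hsη.some
        = g η * forestTotal Ω := by
      rw [Finset.sum_eq_single η]
      · rw [hval η η hsη.some hsη.some_mem, if_pos rfl]
      · intro μ _ hμ
        rw [hval η μ hsη.some hsη.some_mem, if_neg hμ, mul_zero]
      · intro h; exact absurd (Finset.mem_univ η) h
    rw [hsum] at hcf
    rcases mul_eq_zero.mp hcf with h | h
    · exact h
    · exact absurd h (ne_of_gt hF)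
  · apply le_antisymm
    · rw [Submodule.span_le]
      rintro _ ⟨η, rfl⟩
      simp only [SetLike.mem_coe, LinearMap.mem_ker, Matrix.mulVecLin_apply]
      exact hmv η.1 η.2
    · intro x hx
      rw [LinearMap.mem_ker, Matrix.mulVecLin_apply] at hx
      have hxh : ∀ k, ∑ j, Ω j k * x j = 0 := by
        intro k
        have := congrFun hx k
        simpa [Matrix.mulVec, dotProduct, Matrix.transpose_apply] using this
      set c : {S : Set (Fin n) // IsBasin Ω S} → ℝ :=
        fun η => x η.2.1.1.some / forestTotal Ω with hc
      set Ksum : Fin n → ℝ :=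
        ∑ η : {S : Set (Fin n) // IsBasin Ω S}, c η • kappa Ω η.1 with hKs
      have hKapp : ∀ v, Ksum v = ∑ η : {S : Set (Fin n) // IsBasin Ω S},
          c η * kappa Ω η.1 v := by
        intro v
        rw [hKs, Finset.sum_apply]
        simp only [Pi.smul_apply, smul_eq_mul]
      have hKh : ∀ k, ∑ j, Ω j k * Ksum j = 0 := by
        intro k
        have he : ∀ j, Ω j k * Ksum j
            = ∑ η : {S : Set (Fin n) // IsBasin Ω S},
                c η * (Ω j k * kappa Ω η.1 j) := by
          intro j
          rw [hKapp j, Finset.mul_sum]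
          apply Finset.sum_congr rfl
          intro η _; ring
        rw [Finset.sum_congr rfl (fun j _ => he j), Finset.sum_comm]
        apply Finset.sum_eq_zero
        intro η _
        rw [← Finset.mul_sum, hkh η.1 η.2 k, mul_zero]
      have hyh : ∀ k, ∑ j, Ω j k * (x - Ksum) j = 0 := by
        intro k
        have he : ∀ j : Fin n, Ω j k * (x - Ksum) j
            = Ω j k * x j - Ω j k * Ksum j := by
          intro j; simp only [Pi.sub_apply]; ring
        rw [Finset.sum_congr rfl (fun j _ => he j), Finset.sum_sub_distrib,
          hxh k, hKh k, sub_zero]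
      have hyz : ∀ v ∈ basinUnion Ω, (x - Ksum) v = 0 := by
        intro v hv
        obtain ⟨T, hT, hvT⟩ := hv
        have hKv : Ksum v = c ⟨T, hT⟩ * forestTotal Ω := by
          rw [hKapp v, Finset.sum_eq_single (⟨T, hT⟩ : {S : Set (Fin n) // IsBasin Ω S})]
          · rw [hval ⟨T, hT⟩ ⟨T, hT⟩ v hvT, if_pos rfl]
          · intro μ _ hμ
            rw [hval ⟨T, hT⟩ μ v hvT, if_neg hμ, mul_zero]
          · intro h; exact absurd (Finset.mem_univ _) h
        have hceq : c ⟨T, hT⟩ * forestTotal Ω = x hT.1.1.some := by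
          rw [hc]
          exact div_mul_cancel₀ _ (ne_of_gt hF)
        have hxv : x v = x hT.1.1.some :=
          harmonic_const_on_basin hoff hcol hxh hT hvT hT.1.1.some_mem
        simp only [Pi.sub_apply]
        rw [hKv, hceq, hxv, sub_self]
      have h0 : x - Ksum = 0 := harmonic_vanish hoff hcol hyh hyz
      have hxK : x = Ksum := by rwa [sub_eq_zero] at h0
      rw [hxK, hKs]
      exact Submodule.sum_mem _ (fun η _ =>
        Submodule.smul_mem _ _ (Submodule.subset_span ⟨η, rfl⟩))
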